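/- For all n ∈ ℕ and k ∈ [1..⌊n/2⌋], the Pareto front of OneJumpZeroJump_{n,k} (the image of the Pareto set under f = (f₁,f₂)) equals F* = {(a, 2k+n-a) : a ∈ [2k..n] ∪ {k, n+k}}. -/
import Mathlib


/-- Number of ones in a bit-string. -/
def ones {n : ℕ} (x : Fin n → Bool) : ℕ := (Finset.univ.filter (fun i => x i = true)).card

/-- Number of zeros in a bit-string. -/
def zeros {n : ℕ} (x : Fin n → Bool) : ℕ := n - ones x

/-- First objective of OneJumpZeroJump. -/
def f1 (n k : ℕ) (x : Fin n → Bool) : ℕ :=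
  if ones x ≤ n - k ∨ ones x = n then k + ones x else n - ones x

/-- Second objective of OneJumpZeroJump. -/
def f2 (n k : ℕ) (x : Fin n → Bool) : ℕ :=
  if zeros x ≤ n - k ∨ zeros x = n then k + zeros x else n - zeros x

/-- `x` strictly dominates `y`. -/
def dominates (n k : ℕ) (x y : Fin n → Bool) : Prop :=
  f1 n k y ≤ f1 n k x ∧ f2 n k y ≤ f2 n k x ∧ (f1 n k y < f1 n k x ∨ f2 n k y < f2 n k x)

/-- `x` is Pareto optimal: no point dominates it. -/
def paretoOptimal (n k : ℕ) (x : Fin n → Bool) : Prop :=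
  ¬ ∃ y : Fin n → Bool, dominates n k y x

lemma ones_le {n : ℕ} (x : Fin n → Bool) : ones x ≤ n := by
  classical
  calc ones x ≤ Finset.univ.card := Finset.card_filter_le _ _
  _ = n := by simp

lemma exists_ones (n m : ℕ) (h : m ≤ n) : ∃ x : Fin n → Bool, ones x = m := by
  refine ⟨fun i => decide ((i : ℕ) < m), ?_⟩
  unfold ones
  simp only [decide_eq_true_eq]
  have : (Finset.univ.filter fun i : Fin n => (i : ℕ) < m)
      = Finset.map (Fin.castLEEmb h) Finset.univ := by
    ext i
    simp [Fin.castLEEmb, Fin.castLE]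
    constructor
    · intro hi; exact ⟨⟨i, hi⟩, rfl⟩
    · rintro ⟨j, rfl⟩; exact j.isLt
  rw [this, Finset.card_map, Finset.card_univ, Fintype.card_fin]

lemma sum_le (n k : ℕ) (hk1 : 1 ≤ k) (h2k : 2 * k ≤ n) (y : Fin n → Bool) :
    f1 n k y + f2 n k y ≤ n + 2 * k := by
  have hy := ones_le y
  unfold f1 f2 zeros
  split_ifs <;> omega

lemma opt_of_sum (n k : ℕ) (hk1 : 1 ≤ k) (h2k : 2 * k ≤ n) (x : Fin n → Bool)
    (h : f1 n k x + f2 n k x = n + 2 * k) : paretoOptimal n k x := by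
  rintro ⟨y, h1, h2, h3⟩
  have := sum_le n k hk1 h2k y
  omega

lemma sum_eq (n k : ℕ) (hk1 : 1 ≤ k) (h2k : 2 * k ≤ n) (x : Fin n → Bool)
    (h : ones x = 0 ∨ (k ≤ ones x ∧ ones x ≤ n - k) ∨ ones x = n) :
    f1 n k x + f2 n k x = n + 2 * k := by
  have hx := ones_le x
  unfold f1 f2 zeros
  split_ifs <;> omega

lemma optimal_mem (n k : ℕ) (hk1 : 1 ≤ k) (h2k : 2 * k ≤ n) (x : Fin n → Bool)
    (hx : paretoOptimal n k x) :
    ones x = 0 ∨ (k ≤ ones x ∧ ones x ≤ n - k) ∨ ones x = n := by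
  by_contra h
  have hxn := ones_le x
  rcases Nat.lt_or_ge (ones x) k with hm | hm
  · -- 1 ≤ ones x < k : dominated by string with k ones
    obtain ⟨y, hy⟩ := exists_ones n k (by omega)
    exact hx ⟨y, by unfold dominates f1 f2 zeros; rw [hy]; split_ifs <;> omega⟩
  · -- n-k < ones x < n : dominated by string with n-k ones
    obtain ⟨y, hy⟩ := exists_ones n (n - k) (by omega)
    exact hx ⟨y, by unfold dominates f1 f2 zeros; rw [hy]; split_ifs <;> omega⟩

theorem onejumpzerojump_pareto_front (n k : ℕ) (hk1 : 1 ≤ k) (h2k : 2 * k ≤ n) :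
    {p : ℕ × ℕ | ∃ x : Fin n → Bool, paretoOptimal n k x ∧ p = (f1 n k x, f2 n k x)} =
      {p : ℕ × ℕ | ∃ a : ℕ, ((2 * k ≤ a ∧ a ≤ n) ∨ a = k ∨ a = n + k) ∧
        p = (a, 2 * k + n - a)} := by
  ext p
  simp only [Set.mem_setOf_eq]
  constructor
  · rintro ⟨x, hopt, rfl⟩
    have hxn := ones_le x
    have hmem := optimal_mem n k hk1 h2k x hopt
    refine ⟨f1 n k x, ?_, ?_⟩
    · unfold f1; split_ifs <;> omega
    · have h1 : f1 n k x = f1 n k x := rfl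
      have h2 : f2 n k x = 2 * k + n - f1 n k x := by
        unfold f1 f2 zeros; split_ifs <;> omega
      rw [Prod.mk.injEq]; exact ⟨rfl, h2⟩
  · rintro ⟨a, ha, rfl⟩
    have hm : ∃ m : ℕ, m ≤ n ∧ (m = 0 ∨ (k ≤ m ∧ m ≤ n - k) ∨ m = n) ∧
        (if m ≤ n - k ∨ m = n then k + m else n - m) = a := by
      rcases ha with ⟨h1, h2⟩ | rfl | rfl
      · exact ⟨a - k, by omega, by omega, by split_ifs <;> omega⟩
      · exact ⟨0, by omega, by omega, by split_ifs <;> omega⟩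
      · exact ⟨n, by omega, by omega, by split_ifs <;> omega⟩
    obtain ⟨m, hmn, hmem, hfa⟩ := hm
    obtain ⟨x, hx⟩ := exists_ones n m hmn
    have hf1 : f1 n k x = a := by unfold f1; rw [hx]; exact hfa
    have hsum : f1 n k x + f2 n k x = n + 2 * k :=
      sum_eq n k hk1 h2k x (by rw [hx]; omega)
    refine ⟨x, opt_of_sum n k hk1 h2k x hsum, ?_⟩
    rw [Prod.mk.injEq]
    constructor
    · exact hf1.symm
    · omega
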